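/- arXiv:1507.06717 — 2 statements merged into one kernel-verified Lean document; each statement's English description precedes it below -/
import Mathlib

section
/- Assume the Continuum Hypothesis. Let X be a locally compact, locally countable Hausdorff topological space such that every closed subspace of X of cardinality at most ℵ₁ has the Moving Off Property. Then X has the Moving Off Property. -/
open Set Topology

/-- A family of sets indexed by `ι` is *discrete* if every point has a neighborhood
meeting at most one member of the family. -/
def IsDiscreteFamily {ι X : Type*} [TopologicalSpace X] (U : ι → Set X) : Prop :=
  ∀ x : X, ∃ V ∈ nhds x, {i : ι | (U i ∩ V).Nonempty}.Subsingleton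

/-- A *moving off collection* for `X`: a family of nonempty compact sets such that every
compact set is disjoint from some member of the family. -/
def IsMovingOff {X : Type*} [TopologicalSpace X] (𝒦 : Set (Set X)) : Prop :=
  (∀ K ∈ 𝒦, K.Nonempty) ∧ (∀ K ∈ 𝒦, IsCompact K) ∧
    ∀ L : Set X, IsCompact L → ∃ K ∈ 𝒦, Disjoint K L

/-- The *Moving Off Property*: every moving off collection contains an infinite subfamily
of pairwise distinct sets admitting a discrete open expansion. -/
def HasMOP (X : Type*) [TopologicalSpace X] : Prop :=
  ∀ 𝒦 : Set (Set X), IsMovingOff 𝒦 →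
    ∃ K : ℕ → Set X, (∀ n, K n ∈ 𝒦) ∧ Function.Injective K ∧
      ∃ U : ℕ → Set X, (∀ n, IsOpen (U n)) ∧ (∀ n, K n ⊆ U n) ∧ IsDiscreteFamily U

/-- A space is *locally countable* if every point has a countable neighborhood. -/
def LocallyCountable (X : Type*) [TopologicalSpace X] : Prop :=
  ∀ x : X, ∃ N ∈ nhds x, N.Countable

/-!
Choose for every point a countable neighbourhood and, for every compact set `L`, a member of
the moving off collection `𝒦` disjoint from `L`. Compact sets are countable, and in a regular
locally countable space the closure of a countable set has at most `𝔠` points. Under CH,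
closing off under these operations along `ω₁` produces a set `Y` of size `ℵ₁` that contains
the closures of its countable subsets (so it is closed), the chosen neighbourhoods of its
points (so it is open) and the chosen moving-off partners of its compact subsets. The members
of `𝒦` inside the clopen set `Y` form a moving off collection for `Y`; a discrete open
expansion of an infinite subfamily in `Y` is one in `X` as well.
-/

universe u v

open Cardinal Ordinal

theorem Cardinal.continuum_eq_aleph_one_of_univ
    (h : Cardinal.continuum.{v} = Cardinal.aleph.{v} 1) :
    Cardinal.continuum.{u} = Cardinal.aleph.{u} 1 := by
  rw [← Cardinal.lift_inj.{u, v}]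
  simpa using congrArg Cardinal.lift.{u} h

section CountableClosure

variable {α : Type u}

theorem mk_countable_subsets_le_aleph_one (CH : Cardinal.continuum.{u} = ℵ₁) {s : Set α}
    (hs : #s ≤ ℵ₁) :
    #{t : Set α // t ⊆ s ∧ #t ≤ ℵ₀} ≤ ℵ₁ :=
  calc #{t : Set α // t ⊆ s ∧ #t ≤ ℵ₀}
      ≤ max #s ℵ₀ ^ ℵ₀ := mk_bounded_subset_le s ℵ₀
    _ ≤ ℵ₁ ^ ℵ₀ := power_le_power_right (max_le hs (aleph0_le_aleph 1))
    _ = ℵ₁ := by rw [← CH, continuum_power_aleph0]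

noncomputable def countableClosureStage (F : Set α → Set α) : Ordinal.{u} → Set α
  | o => ⋃ C : {C : Set α // C ⊆ ⋃ o' < o, countableClosureStage F o' ∧ #C ≤ ℵ₀}, F C
termination_by o => o
decreasing_by exact ‹_›

theorem mk_countableClosureStage_le (CH : Cardinal.continuum.{u} = ℵ₁) {F : Set α → Set α}
    (hF : ∀ C, C.Countable → #(F C) ≤ ℵ₁) {o : Ordinal.{u}} (ho : o < ω₁) :
    #(countableClosureStage F o) ≤ ℵ₁ := by
  induction o using WellFoundedLT.induction with
  | _ o IH =>
    have hprev : #(⋃ o' < o, countableClosureStage F o') ≤ ℵ₁ :=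
      mk_biUnion_le_of_le (lt_ord.1 ((ord_aleph 1).symm ▸ ho)).le (aleph0_le_aleph 1) _
        fun o' ho' => IH o' ho' (ho'.trans ho)
    rw [countableClosureStage]
    calc _ ≤ #{C : Set α // C ⊆ ⋃ o' < o, countableClosureStage F o' ∧ #C ≤ ℵ₀} *
          ⨆ C : {C : Set α // C ⊆ ⋃ o' < o, countableClosureStage F o' ∧ #C ≤ ℵ₀}, #(F C) :=
          mk_iUnion_le _
      _ ≤ ℵ₁ * ℵ₁ := mul_le_mul' (mk_countable_subsets_le_aleph_one CH hprev)
          (ciSup_le' fun C => hF C (le_aleph0_iff_set_countable.1 C.2.2))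
      _ = ℵ₁ := mul_eq_self (aleph0_le_aleph 1)

theorem exists_stage_of_countable_subset {F : Set α → Set α} {C : Set α} (hC : C.Countable)
    (hCY : C ⊆ ⋃ o < ω₁, countableClosureStage F o) :
    ∃ o < ω₁, C ⊆ ⋃ o' < o, countableClosureStage F o' := by
  have hstage : ∀ x : C, ∃ o < ω₁, (x : α) ∈ countableClosureStage F o := fun x => by
    simpa using hCY x.2
  choose o hoω hxo using hstage
  have : Countable C := hC.to_subtype
  refine ⟨Order.succ (⨆ x, o x), (isSuccLimit_omega 1).succ_lt (iSup_lt_omega_one hoω), ?_⟩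
  exact fun x hx => mem_biUnion (Order.lt_succ_of_le (Ordinal.le_iSup o ⟨x, hx⟩)) (hxo ⟨x, hx⟩)

theorem exists_mk_le_aleph_one_forall_countable_subset (CH : Cardinal.continuum.{u} = ℵ₁)
    (F : Set α → Set α) (hF : ∀ C, C.Countable → #(F C) ≤ ℵ₁) :
    ∃ Y : Set α, #Y ≤ ℵ₁ ∧ ∀ C ⊆ Y, C.Countable → F C ⊆ Y := by
  refine ⟨⋃ o < ω₁, countableClosureStage F o,
    mk_biUnion_le_of_le (card_omega 1).le (aleph0_le_aleph 1) _
      fun o ho => mk_countableClosureStage_le CH hF ho,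
    fun C hCY hC => ?_⟩
  obtain ⟨o, ho, hCo⟩ := exists_stage_of_countable_subset hC hCY
  refine subset_trans ?_ (subset_biUnion_of_mem (u := countableClosureStage F) ho)
  rw [countableClosureStage]
  exact subset_iUnion_of_subset ⟨C, hCo, le_aleph0_iff_set_countable.2 hC⟩ subset_rfl

end CountableClosure

section LocallyCountable

variable {X : Type u} [TopologicalSpace X]

theorem mem_closure_inter_of_mem_nhds {s N : Set X} {p : X} (hp : p ∈ closure s)
    (hN : N ∈ 𝓝 p) : p ∈ closure (s ∩ N) :=
  mem_closure_iff_nhds.2 fun t ht => by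
    simpa only [inter_comm s, ← inter_assoc] using
      mem_closure_iff_nhds.1 hp _ (Filter.inter_mem ht hN)

theorem LocallyCountable.countable_of_isCompact (hX : LocallyCountable X) {L : Set X}
    (hL : IsCompact L) : L.Countable := by
  choose N hN hNc using hX
  obtain ⟨t, -, hLt⟩ := hL.elim_nhds_subcover N fun x _ => hN x
  exact (t.countable_toSet.biUnion fun x _ => hNc x).mono hLt

theorem LocallyCountable.exists_isClosed_countable_mem_nhds [RegularSpace X]
    (hX : LocallyCountable X) (x : X) : ∃ K ∈ 𝓝 x, IsClosed K ∧ K.Countable := by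
  obtain ⟨N, hN, hNc⟩ := hX x
  obtain ⟨K, hK, hKcl, hKN⟩ := exists_mem_nhds_isClosed_subset hN
  exact ⟨K, hK, hKcl, hNc.mono hKN⟩

/-- A point of `closure C` is determined, up to countably many choices, by the trace of `C` on
its closed countable neighbourhood, since it lies in the closure of that trace. -/
theorem LocallyCountable.mk_closure_le_continuum [RegularSpace X] (hX : LocallyCountable X)
    {C : Set X} (hC : C.Countable) : #(closure C) ≤ 𝔠 := by
  choose K hK hKcl hKc using hX.exists_isClosed_countable_mem_nhds
  let trace : closure C → Set C := fun p => {c | (c : X) ∈ K p}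
  have hfiber : ∀ D, #(trace ⁻¹' {D}) ≤ ℵ₀ := by
    intro D
    rcases (trace ⁻¹' {D}).eq_empty_or_nonempty with hD | ⟨p₀, hp₀⟩
    · simp [hD]
    refine le_aleph0_iff_set_countable.2 ((hKc p₀).preimage Subtype.val_injective |>.mono ?_)
    intro p hp
    refine (hKcl p₀).closure_subset_iff.2 ?_ (mem_closure_inter_of_mem_nhds p.2 (hK p))
    rintro x ⟨hxC, hxK⟩
    have : (⟨x, hxC⟩ : C) ∈ trace p := hxK
    rwa [show trace p = trace p₀ from hp.trans hp₀.symm] at this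
  calc #(closure C) ≤ #(Set C) * ℵ₀ := mk_le_mk_mul_of_mk_preimage_le trace hfiber
    _ ≤ 𝔠 * ℵ₀ := by
        rw [mk_set, ← two_power_aleph0]
        exact mul_le_mul_left (power_le_power_left two_ne_zero (le_aleph0_iff_set_countable.2 hC)) _
    _ = 𝔠 := continuum_mul_aleph0

theorem LocallyCountable.isClosed_of_closure_subset (hX : LocallyCountable X) {Y : Set X}
    (hY : ∀ C ⊆ Y, C.Countable → closure C ⊆ Y) : IsClosed Y :=
  _root_.isClosed_of_closure_subset fun p hp => by
    obtain ⟨N, hN, hNc⟩ := hX p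
    exact hY (Y ∩ N) inter_subset_left (hNc.mono inter_subset_right)
      (mem_closure_inter_of_mem_nhds hp hN)

end LocallyCountable

section MovingOff

variable {X : Type u} [TopologicalSpace X]

theorem IsDiscreteFamily.image_of_isClosedEmbedding {ι Z : Type*} [TopologicalSpace Z]
    {f : Z → X} (hf : IsClosedEmbedding f) {U : ι → Set Z} (hU : IsDiscreteFamily U) :
    IsDiscreteFamily fun i => f '' U i := by
  intro x
  by_cases hx : x ∈ range f
  · obtain ⟨z, rfl⟩ := hx
    obtain ⟨V, hV, hUV⟩ := hU z
    rw [hf.isInducing.nhds_eq_comap] at hV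
    obtain ⟨t, ht, htV⟩ := hV
    have htrace : ∀ i, (f '' U i ∩ t).Nonempty → (U i ∩ V).Nonempty := by
      rintro i ⟨_, ⟨y, hy, rfl⟩, hyt⟩
      exact ⟨y, hy, htV hyt⟩
    exact ⟨t, ht, fun i hi j hj => hUV (htrace i hi) (htrace j hj)⟩
  · refine ⟨(range f)ᶜ, hf.isClosed_range.isOpen_compl.mem_nhds hx, ?_⟩
    rintro i ⟨_, ⟨y, -, rfl⟩, hy⟩
    exact absurd (mem_range_self y) hy

theorem isMovingOff_preimage_image_val {Y : Set X} {𝒦 : Set (Set X)}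
    (hne : ∀ K ∈ 𝒦, K.Nonempty) (hcpt : ∀ K ∈ 𝒦, IsCompact K)
    (hmove : ∀ L, IsCompact L → L ⊆ Y → ∃ K ∈ 𝒦, K ⊆ Y ∧ Disjoint K L) :
    IsMovingOff (image (Subtype.val : Y → X) ⁻¹' 𝒦) := by
  refine ⟨fun K hK => (hne _ hK).of_image, fun K hK => Subtype.isCompact_iff.2 (hcpt _ hK),
    fun L hL => ?_⟩
  obtain ⟨K, hK, hKY, hKL⟩ :=
    hmove _ (hL.image continuous_subtype_val) (Subtype.coe_image_subset Y L)
  refine ⟨Subtype.val ⁻¹' K, ?_, ?_⟩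
  · rwa [mem_preimage, Subtype.image_preimage_coe, inter_eq_self_of_subset_right hKY]
  · rw [← preimage_image_eq L Subtype.val_injective]
    exact hKL.preimage Subtype.val

theorem HasMOP.exists_discrete_expansion_of_isClopen {Y : Set X} (hMOP : HasMOP Y)
    (hY : IsClopen Y) {𝒦 : Set (Set X)} (hne : ∀ K ∈ 𝒦, K.Nonempty)
    (hcpt : ∀ K ∈ 𝒦, IsCompact K)
    (hmove : ∀ L, IsCompact L → L ⊆ Y → ∃ K ∈ 𝒦, K ⊆ Y ∧ Disjoint K L) :
    ∃ K : ℕ → Set X, (∀ n, K n ∈ 𝒦) ∧ Function.Injective K ∧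
      ∃ U : ℕ → Set X, (∀ n, IsOpen (U n)) ∧ (∀ n, K n ⊆ U n) ∧ IsDiscreteFamily U := by
  obtain ⟨K, hK𝒦, hKinj, U, hUo, hKU, hU⟩ :=
    hMOP _ (isMovingOff_preimage_image_val hne hcpt hmove)
  exact ⟨fun n => Subtype.val '' K n, hK𝒦, (image_injective.2 Subtype.val_injective).comp hKinj,
    fun n => Subtype.val '' U n, fun n => hY.isOpen.isOpenMap_subtype_val _ (hUo n),
    fun n => image_mono (hKU n),
    hU.image_of_isClosedEmbedding hY.isClosed.isClosedEmbedding_subtypeVal⟩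

end MovingOff

/-- Corollary 15: under CH, if `X` is locally compact, locally countable, Hausdorff, and every
closed subspace of cardinality at most `ℵ₁` has the MOP, then `X` has the MOP. -/
theorem mop_of_small_closed_subspaces_CH (CH : Cardinal.continuum = Cardinal.aleph 1)
    (X : Type*) [TopologicalSpace X] [T2Space X] [LocallyCompactSpace X]
    (hlc : LocallyCountable X)
    (h : ∀ Y : Set X, IsClosed Y → Cardinal.mk Y ≤ Cardinal.aleph 1 → HasMOP Y) :
    HasMOP X := by
  rintro 𝒦 ⟨hne, hcpt, hmove⟩
  choose N hN hNc using fun x => hlc x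
  choose g hg𝒦 hgL using hmove
  have CH' := continuum_eq_aleph_one_of_univ CH
  let E : Set X → Set X := fun C => (⋃ x ∈ C, N x) ∪ ⋃ hC : IsCompact C, g C hC
  have hE : ∀ C, C.Countable → (E C).Countable := fun C hC =>
    (hC.biUnion fun x _ => hNc x).union <|
      countable_iUnion fun hC => hlc.countable_of_isCompact (hcpt _ (hg𝒦 C hC))
  have hF : ∀ C, C.Countable → #↥(closure C ∪ E C) ≤ ℵ₁ := fun C hC =>
    calc #↥(closure C ∪ E C) ≤ #(closure C) + #(E C) := mk_union_le _ _
      _ ≤ 𝔠 + ℵ₀ := add_le_add (hlc.mk_closure_le_continuum hC)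
          (le_aleph0_iff_set_countable.2 (hE C hC))
      _ = ℵ₁ := by rw [continuum_add_aleph0, CH']
  obtain ⟨Y, hYcard, hYF⟩ := exists_mk_le_aleph_one_forall_countable_subset CH' _ hF
  have hYopen : IsOpen Y := isOpen_iff_mem_nhds.2 fun x hx => Filter.mem_of_superset (hN x)
    fun y hy => hYF {x} (singleton_subset_iff.2 hx) (countable_singleton x)
      (Or.inr (Or.inl (mem_biUnion (mem_singleton x) hy)))
  have hYclosed : IsClosed Y := hlc.isClosed_of_closure_subset fun C hCY hC =>
    subset_union_left.trans (hYF C hCY hC)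
  refine (h Y hYclosed hYcard).exists_discrete_expansion_of_isClopen ⟨hYclosed, hYopen⟩ hne hcpt
    fun L hL hLY => ⟨g L hL, hg𝒦 L hL, fun y hy => ?_, hgL L hL⟩
  exact hYF L hLY (hlc.countable_of_isCompact hL) (Or.inr (Or.inr (mem_iUnion.2 ⟨hL, hy⟩)))
end

section
/- Let X be a locally compact Hausdorff topological space. If the topological sum of countably many copies of X (i.e., Σ_{n ∈ ℕ} X) has the Moving Off Property, then for every index type ι the topological sum Σ_{i ∈ ι} X has the Moving Off Property. -/
open Set Topology

/-
Let `𝒦` be a moving off collection in `Σ_ι X` and `B ⊆ ι` countable. Code `B` injectively into `ℕ`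
and send all other summands to a single index `N`: over all `N` and `K ∈ 𝒦`, the images of `K` form
a moving off collection in `Σ_ℕ X` (given `L`, move off the compact pullback of `L` over `B`, and
take `N` outside the finitely many indices met by `L`). Pulling back the discrete expansion given by
the MOP of `Σ_ℕ X` expands the parts over `B` of a sequence in `𝒦`, so every compact set over `B`
misses one of its members. Closing a countable set of indices under the supports of these sequences
produces a countable `B` and a subfamily of `𝒦` lying over `B` that still moves off all compact sets
over `B`; for this subfamily the pulled-back expansion covers whole members, and a discrete
expansion of nonempty sets has distinct members.
-/

section DiscreteFamily

variable {ι X : Type*} [TopologicalSpace X]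

lemma IsDiscreteFamily.locallyFinite {U : ι → Set X} (hU : IsDiscreteFamily U) :
    LocallyFinite U := fun x =>
  let ⟨V, hV, hUV⟩ := hU x
  ⟨V, hV, hUV.finite⟩

lemma IsDiscreteFamily.preimage {Y : Type*} [TopologicalSpace Y] {U : ι → Set Y}
    (hU : IsDiscreteFamily U) {f : X → Y} (hf : Continuous f) :
    IsDiscreteFamily fun i => f ⁻¹' U i := by
  intro x
  obtain ⟨V, hV, hUV⟩ := hU (f x)
  exact ⟨f ⁻¹' V, hf.continuousAt.preimage_mem_nhds hV,
    hUV.anti fun i ⟨y, hyU, hyV⟩ => ⟨f y, hyU, hyV⟩⟩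

lemma IsDiscreteFamily.injective_of_subset {U K : ι → Set X} (hU : IsDiscreteFamily U)
    (hK : ∀ i, (K i).Nonempty) (hKU : ∀ i, K i ⊆ U i) : Function.Injective K := by
  intro i j hij
  obtain ⟨x, hx⟩ := hK i
  obtain ⟨V, hV, hUV⟩ := hU x
  exact hUV ⟨x, hKU i hx, mem_of_mem_nhds hV⟩ ⟨x, hKU j (hij ▸ hx), mem_of_mem_nhds hV⟩

end DiscreteFamily

section Sigma

variable {ι κ : Type*}

lemma IsCompact.finite_fst {X : ι → Type*} [∀ i, TopologicalSpace (X i)]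
    {K : Set (Σ i, X i)} (hK : IsCompact K) : (Sigma.fst '' K).Finite := by
  obtain ⟨s, t, hs, -, rfl⟩ := hK.sigma_exists_finite_sigma_eq
  exact hs.subset (fst_image_sigma_subset s t)

lemma IsCompact.inter_preimage_sigmaMap {X : κ → Type*} [∀ k, TopologicalSpace (X k)]
    {c : ι → κ} {B : Set ι} (hc : InjOn c B) {L : Set (Σ k, X k)} (hL : IsCompact L) :
    IsCompact (Sigma.fst ⁻¹' B ∩ Sigma.map c (fun i => (id : X (c i) → X (c i))) ⁻¹' L) := by
  have hfin : (B ∩ c ⁻¹' (Sigma.fst '' L)).Finite :=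
    Finite.of_finite_image (hL.finite_fst.subset (image_subset_iff.mpr inter_subset_right))
      (hc.mono inter_subset_left)
  convert isCompact_sigma hfin fun i _ =>
    (IsClosedEmbedding.sigmaMk (i := c i)).isCompact_preimage hL using 1
  ext ⟨i, x⟩
  simp only [Sigma.map, mem_inter_iff, mem_preimage, mem_sigma_iff, mem_image, id]
  exact ⟨fun ⟨hi, hx⟩ => ⟨⟨hi, _, hx, rfl⟩, hx⟩, fun ⟨⟨hi, _⟩, hx⟩ => ⟨hi, hx⟩⟩

end Sigma

section MovingOff

variable {ι X : Type*} [TopologicalSpace X]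

def IsMovingOffOn (𝒦 : Set (Set (Σ _ : ι, X))) (B : Set ι) : Prop :=
  (∀ K ∈ 𝒦, K.Nonempty) ∧ (∀ K ∈ 𝒦, IsCompact K) ∧
    ∀ L, IsCompact L → L ⊆ Sigma.fst ⁻¹' B → ∃ K ∈ 𝒦, Disjoint K L

lemma IsMovingOff.isMovingOffOn {𝒦 : Set (Set (Σ _ : ι, X))} (h𝒦 : IsMovingOff 𝒦)
    (B : Set ι) : IsMovingOffOn 𝒦 B :=
  ⟨h𝒦.1, h𝒦.2.1, fun L hL _ => h𝒦.2.2 L hL⟩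

lemma IsMovingOffOn.isMovingOff_image_sigmaMap {𝒦 : Set (Set (Σ _ : ι, X))} {B : Set ι}
    [DecidablePred (· ∈ B)] (h𝒦 : IsMovingOffOn 𝒦 B) {e : ι → ℕ} (he : InjOn e B) :
    IsMovingOff {T | ∃ K ∈ 𝒦, ∃ N : ℕ,
      T = Sigma.map (β₂ := fun _ => X) (B.piecewise e fun _ => N) (fun _ => id) '' K} := by
  refine ⟨?_, ?_, fun L hL => ?_⟩
  · rintro _ ⟨K, hK, N, rfl⟩
    exact (h𝒦.1 K hK).image _
  · rintro _ ⟨K, hK, N, rfl⟩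
    exact (h𝒦.2.1 K hK).image (continuous_sigma_map.mpr fun _ => continuous_id)
  · have hA := IsCompact.inter_preimage_sigmaMap (κ := ℕ) (X := fun _ => X)
      (he.congr (piecewise_eqOn B e fun _ => 0).symm) hL
    obtain ⟨K, hK, hKA⟩ := h𝒦.2.2 _ hA inter_subset_left
    obtain ⟨N, hN⟩ := hL.finite_fst.exists_notMem
    refine ⟨_, ⟨K, hK, N, rfl⟩, disjoint_left.mpr ?_⟩
    rintro _ ⟨⟨i, x⟩, hp, rfl⟩ hpL
    by_cases hi : i ∈ B
    · refine disjoint_left.mp hKA hp ⟨hi, ?_⟩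
      simpa only [mem_preimage, Sigma.map, piecewise_eq_of_mem _ _ _ hi] using hpL
    · exact hN ⟨_, hpL, by simp only [Sigma.map, piecewise_eq_of_notMem _ _ _ hi]⟩

end MovingOff

section CountableSum

variable {ι X : Type*} [TopologicalSpace X]

theorem HasMOP.exists_discrete_expansion_on (h : HasMOP (Σ _ : ℕ, X))
    {𝒦 : Set (Set (Σ _ : ι, X))} {B : Set ι} (hB : B.Countable) (h𝒦 : IsMovingOffOn 𝒦 B) :
    ∃ K : ℕ → Set (Σ _ : ι, X), (∀ n, K n ∈ 𝒦) ∧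
      ∃ U : ℕ → Set (Σ _ : ι, X), (∀ n, IsOpen (U n)) ∧
        (∀ n, K n ∩ Sigma.fst ⁻¹' B ⊆ U n) ∧ IsDiscreteFamily U := by
  classical
  obtain ⟨e, he⟩ := countable_iff_exists_injOn.mp hB
  obtain ⟨T, hT, -, U, hUo, hTU, hU⟩ := h _ (h𝒦.isMovingOff_image_sigmaMap he)
  choose K hK N hKT using hT
  set f := Sigma.map (β₂ := fun _ => X) (B.piecewise e fun _ => 0) fun _ => id
  have hf : Continuous f := continuous_sigma_map.mpr fun _ => continuous_id
  refine ⟨K, hK, fun n => f ⁻¹' U n, fun n => (hUo n).preimage hf, ?_, hU.preimage hf⟩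
  rintro n ⟨i, x⟩ ⟨hp, hi : i ∈ B⟩
  refine hTU n ((hKT n).symm ▸ ⟨⟨i, x⟩, hp, ?_⟩)
  simp only [f, Sigma.map, piecewise_eq_of_mem _ _ _ hi]

theorem HasMOP.exists_seq_disjoint_on (h : HasMOP (Σ _ : ℕ, X))
    {𝒦 : Set (Set (Σ _ : ι, X))} (h𝒦 : IsMovingOff 𝒦) {B : Set ι} (hB : B.Countable) :
    ∃ K : ℕ → Set (Σ _ : ι, X), (∀ n, K n ∈ 𝒦) ∧
      ∀ L, IsCompact L → L ⊆ Sigma.fst ⁻¹' B → ∃ n, Disjoint (K n) L := by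
  obtain ⟨K, hK, U, -, hKU, hU⟩ := h.exists_discrete_expansion_on hB (h𝒦.isMovingOffOn B)
  refine ⟨K, hK, fun L hL hLB => ?_⟩
  obtain ⟨n, hn⟩ := (hU.locallyFinite.finite_nonempty_inter_compact hL).exists_notMem
  exact ⟨n, disjoint_left.mpr fun p hpK hpL => hn ⟨p, hKU n ⟨hpK, hLB hpL⟩, hpL⟩⟩

theorem HasMOP.exists_isMovingOffOn_countable (h : HasMOP (Σ _ : ℕ, X))
    {𝒦 : Set (Set (Σ _ : ι, X))} (h𝒦 : IsMovingOff 𝒦) :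
    ∃ 𝒮 ⊆ 𝒦, ∃ B : Set ι, B.Countable ∧ (∀ K ∈ 𝒮, K ⊆ Sigma.fst ⁻¹' B) ∧
      IsMovingOffOn 𝒮 B := by
  choose K hK hKL using fun B : {B : Set ι // B.Countable} => h.exists_seq_disjoint_on h𝒦 B.2
  let grow : {B : Set ι // B.Countable} → {B : Set ι // B.Countable} := fun B =>
    ⟨B ∪ ⋃ n, Sigma.fst '' K B n,
      B.2.union (countable_iUnion fun n => (h𝒦.2.1 _ (hK B n)).finite_fst.countable)⟩
  let Bs : ℕ → {B : Set ι // B.Countable} := fun m => grow^[m] ⟨∅, countable_empty⟩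
  have hBs_succ : ∀ m, (Bs (m + 1)).1 = (Bs m).1 ∪ ⋃ n, Sigma.fst '' K (Bs m) n := fun m =>
    congrArg Subtype.val (Function.iterate_succ_apply' grow m _)
  have hBs_mono : Monotone fun m => (Bs m).1 := monotone_nat_of_le_succ fun m =>
    (hBs_succ m).symm ▸ subset_union_left
  refine ⟨⋃ m, range (K (Bs m)), iUnion_subset fun m => range_subset_iff.mpr (hK _),
    ⋃ m, (Bs m).1, countable_iUnion fun m => (Bs m).2, ?_, ?_, ?_, ?_⟩
  · simp only [mem_iUnion, mem_range]
    rintro _ ⟨m, n, rfl⟩ p hp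
    refine mem_iUnion.mpr ⟨m + 1, ?_⟩
    rw [hBs_succ]
    exact Or.inr (mem_iUnion.mpr ⟨n, p, hp, rfl⟩)
  · simp only [mem_iUnion, mem_range]
    rintro _ ⟨m, n, rfl⟩
    exact h𝒦.1 _ (hK _ n)
  · simp only [mem_iUnion, mem_range]
    rintro _ ⟨m, n, rfl⟩
    exact h𝒦.2.1 _ (hK _ n)
  · intro L hL hLB
    obtain ⟨m, hm⟩ := hBs_mono.directed_le.exists_mem_subset_of_finset_subset_biUnion
      (s := hL.finite_fst.toFinset) (by simpa only [Finite.coe_toFinset, image_subset_iff])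
    obtain ⟨n, hn⟩ := hKL _ L hL (by simpa only [Finite.coe_toFinset, image_subset_iff] using hm)
    exact ⟨_, mem_iUnion.mpr ⟨m, n, rfl⟩, hn⟩

end CountableSum

theorem mop_arbitrary_sum_of_countable_sum_general (X : Type*) [TopologicalSpace X]
    (h : HasMOP (Σ _ : ℕ, X)) (ι : Type*) :
    HasMOP (Σ _ : ι, X) := by
  intro 𝒦 h𝒦
  obtain ⟨𝒮, h𝒮𝒦, B, hB, h𝒮B, h𝒮⟩ := h.exists_isMovingOffOn_countable h𝒦
  obtain ⟨K, hK, U, hUo, hKU, hU⟩ := h.exists_discrete_expansion_on hB h𝒮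
  have hKU' : ∀ n, K n ⊆ U n := fun n p hp => hKU n ⟨hp, h𝒮B _ (hK n) hp⟩
  exact ⟨K, fun n => h𝒮𝒦 (hK n), hU.injective_of_subset (fun n => h𝒮.1 _ (hK n)) hKU',
    U, hUo, hKU', hU⟩

/-- If countable sums of copies of a locally compact Hausdorff `X` have the MOP, then arbitrary
sums of copies of `X` have the MOP. -/
theorem mop_arbitrary_sum_of_countable_sum (X : Type*) [TopologicalSpace X] [T2Space X]
    [LocallyCompactSpace X] (h : HasMOP (Σ _ : ℕ, X)) (ι : Type*) :
    HasMOP (Σ _ : ι, X) :=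
  mop_arbitrary_sum_of_countable_sum_general X h ι
end
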